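/- Let F: ℝ → ℝ satisfy F ≡ 1 on (−t, t) with t > 0, and let (λ_k) be nondecreasing nonnegative reals with λ_k ≥ c k^b (c, b > 0) for large k. Suppose (a_k) ∈ ℓ² is such that for some s ≥ 0 and every δ > 0 and C > 0 there are infinitely many k with |a_k| > C k^{−s − 1/2 − δ}. Then for every δ > 0 the net ε ↦ (Σ_{λ_k < t/ε} |a_k|²)^{1/2} is NOT O(ε^{(1/b)(s + 1/2) + δ}) as ε → 0; in particular ‖(F(ελ_k)a_k)_k‖_{ℓ²} fails to be O(ε^N) uniformly in the Sobolev scale, so the embedded element is not in G^∞. -/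

import Mathlib

/-!
Testing the `O(ε^α)` bound at `ε ≈ t / (2 λ_k)` isolates the single coefficient `a_k`, so
`|a_k| ≲ λ_k^{-α} ≲ k^{-bα}` for all large `k`, by the Weyl-type lower bound `λ_k ≥ c k^b`.
With `α = (s + 1/2)/b + δ` this is `k^{-s-1/2-bδ}`, which the infinitely many large
coefficients forbid.
-/

open Real

noncomputable def truncNorm {ι : Type*} (a lam : ι → ℝ) (T : ℝ) : ℝ :=
  √(∑' k, if lam k < T then a k ^ 2 else 0)

theorem abs_le_truncNorm {ι : Type*} {a lam : ι → ℝ} (ha : Summable fun k => a k ^ 2)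
    {T : ℝ} {k : ι} (hk : lam k < T) : |a k| ≤ truncNorm a lam T := by
  have hsum : Summable fun j => if lam j < T then a j ^ 2 else 0 :=
    ha.of_nonneg_of_le (fun j => by positivity) fun j => by
      split_ifs <;> [exact le_rfl; positivity]
  have hterm : a k ^ 2 ≤ ∑' j, if lam j < T then a j ^ 2 else 0 := by
    simpa [hk] using hsum.le_tsum k fun j _ => by positivity
  rw [← sqrt_sq_eq_abs]
  exact sqrt_le_sqrt hterm

theorem abs_le_of_truncNorm_le_rpow {ι : Type*} {a lam : ι → ℝ}
    (ha : Summable fun k => a k ^ 2) {t C α ε₀ : ℝ} (ht : 0 < t) (hC : 0 ≤ C) (hα : 0 ≤ α)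
    (hε₀ : 0 < ε₀) (hbd : ∀ ε : ℝ, 0 < ε → ε < ε₀ → truncNorm a lam (t / ε) ≤ C * ε ^ α)
    {k : ι} (hk : 0 < lam k) : |a k| ≤ C * (t / 2 / lam k) ^ α := by
  set ε := min (ε₀ / 2) (t / 2 / lam k)
  have hε : 0 < ε := lt_min (by linarith) (by positivity)
  have hεle : ε ≤ t / 2 / lam k := min_le_right _ _
  have hlt : lam k < t / ε := by
    rw [lt_div_iff₀ hε]
    rw [le_div_iff₀ hk] at hεle
    linarith
  calc |a k| ≤ truncNorm a lam (t / ε) := abs_le_truncNorm ha hlt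
    _ ≤ C * ε ^ α := hbd ε hε ((min_le_left _ _).trans_lt (by linarith))
    _ ≤ C * (t / 2 / lam k) ^ α := by gcongr

theorem div_rpow_le_of_mul_rpow_le {x b c t L α : ℝ} (hx : 0 < x) (hc : 0 < c) (ht : 0 ≤ t)
    (hα : 0 ≤ α) (hL : c * x ^ b ≤ L) : (t / L) ^ α ≤ (t / c) ^ α * x ^ (-(b * α)) := by
  have hxb : 0 < x ^ b := rpow_pos_of_pos hx b
  have hL0 : 0 < L := lt_of_lt_of_le (by positivity) hL
  calc (t / L) ^ α ≤ (t / (c * x ^ b)) ^ α := by gcongr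
    _ = (t / c) ^ α * x ^ (-(b * α)) := by
      rw [div_mul_eq_div_div, div_eq_mul_inv _ (x ^ b), ← rpow_neg hx.le,
        mul_rpow (by positivity) (by positivity), ← rpow_mul hx.le, neg_mul]

theorem embedded_nonsmooth_not_Ginfty_general
    (t : ℝ) (ht : 0 < t)
    (lam : ℕ → ℝ)
    (c b : ℝ) (hc : 0 < c) (hb : 0 < b)
    (k₀ : ℕ) (hweyl : ∀ k : ℕ, k₀ ≤ k → c * (k : ℝ) ^ b ≤ lam k)
    (a : ℕ → ℝ) (hl2 : Summable fun k => (a k) ^ 2)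
    (s : ℝ) (hs : 0 ≤ s)
    (hbig : ∀ δ > (0:ℝ), ∀ C > (0:ℝ), ∀ m : ℕ, ∃ k : ℕ, m ≤ k ∧
      C * (k : ℝ) ^ (-s - 1/2 - δ) < |a k|) :
    ∀ δ > (0:ℝ),
      ¬ ∃ C > (0:ℝ), ∃ ε₀ > (0:ℝ), ∀ ε : ℝ, 0 < ε → ε < ε₀ →
        Real.sqrt (∑' k : ℕ, if lam k < t / ε then (a k) ^ 2 else 0)
          ≤ C * ε ^ ((1 / b) * (s + 1/2) + δ) := by
  rintro δ hδ ⟨C, hC, ε₀, hε₀, hbd⟩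
  set α := (1 / b) * (s + 1/2) + δ
  have hα : 0 ≤ α := by positivity
  obtain ⟨k, hk, hak⟩ :=
    hbig (b * δ) (by positivity) (C * (t / 2 / c) ^ α) (by positivity) (max k₀ 1)
  have hk1 : (1 : ℝ) ≤ k := by exact_mod_cast (le_max_right _ _).trans hk
  have hweylk := hweyl k ((le_max_left _ _).trans hk)
  have hlam : 0 < lam k := lt_of_lt_of_le (by positivity) hweylk
  have hexp : -(b * α) = -s - 1/2 - b * δ := by
    simp only [α]
    field_simp
    ring
  refine hak.not_ge ?_
  calc |a k| ≤ C * (t / 2 / lam k) ^ α :=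
        abs_le_of_truncNorm_le_rpow hl2 ht hC.le hα hε₀ hbd hlam
    _ ≤ C * ((t / 2 / c) ^ α * (k : ℝ) ^ (-(b * α))) := by
        gcongr
        exact div_rpow_le_of_mul_rpow_le (by linarith) hc (by positivity) hα hweylk
    _ = C * (t / 2 / c) ^ α * (k : ℝ) ^ (-s - 1/2 - b * δ) := by rw [hexp, mul_assoc]

/-- Abstract form of Proposition 'regularity': let `F ≡ 1` on `(−t, t)`, `t > 0`, and
let `(λ_k)` be nondecreasing nonnegative reals with `λ_k ≥ c k^b` for large `k`.
If `(a_k) ∈ ℓ²` has, for some `s ≥ 0`, for every `δ > 0` and `C > 0` infinitely many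
`k` with `|a_k| > C k^{−s−1/2−δ}`, then for every `δ > 0` the net
`ε ↦ (Σ_{λ_k < t/ε} a_k²)^{1/2}` is not `O(ε^{(1/b)(s+1/2)+δ})` as `ε → 0`;
in particular the embedded element fails the uniform `G^∞` estimates. -/
theorem embedded_nonsmooth_not_Ginfty
    (F : ℝ → ℝ) (t : ℝ) (ht : 0 < t) (hF1 : ∀ x : ℝ, -t < x → x < t → F x = 1)
    (lam : ℕ → ℝ) (hmono : Monotone lam) (hpos : ∀ k, 0 ≤ lam k)
    (c b : ℝ) (hc : 0 < c) (hb : 0 < b)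
    (k₀ : ℕ) (hweyl : ∀ k : ℕ, k₀ ≤ k → c * (k : ℝ) ^ b ≤ lam k)
    (a : ℕ → ℝ) (hl2 : Summable fun k => (a k) ^ 2)
    (s : ℝ) (hs : 0 ≤ s)
    (hbig : ∀ δ > (0:ℝ), ∀ C > (0:ℝ), ∀ m : ℕ, ∃ k : ℕ, m ≤ k ∧
      C * (k : ℝ) ^ (-s - 1/2 - δ) < |a k|) :
    ∀ δ > (0:ℝ),
      ¬ ∃ C > (0:ℝ), ∃ ε₀ > (0:ℝ), ∀ ε : ℝ, 0 < ε → ε < ε₀ →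
        Real.sqrt (∑' k : ℕ, if lam k < t / ε then (a k) ^ 2 else 0)
          ≤ C * ε ^ ((1 / b) * (s + 1/2) + δ) :=
  embedded_nonsmooth_not_Ginfty_general t ht lam c b hc hb k₀ hweyl a hl2 s hs hbig
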